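/- Let H ∈ (1/2,1) and Φ(x,y) := |1+x|^{2H} − |1+(x−y)|^{2H} − 1 + |1−y|^{2H}. Then sup_{(x,y) ∈ Q} |Φ(x,y)/(xy)| < ∞, where Q := {(x,y) ∈ (0,∞)² : max(x,y) < 1} ∪ {(x,y) ∈ (0,∞)² : min(x,y) < 1 ≤ max(x,y)}. -/

import Mathlib

open Real

noncomputable section

/-- `Φ(x,y) = |1+x|^{2H} − |1+(x−y)|^{2H} − 1 + |1−y|^{2H}`. -/
def PhiFn (H x y : ℝ) : ℝ :=
  |1 + x| ^ (2*H) - |1 + (x - y)| ^ (2*H) - 1 + |1 - y| ^ (2*H)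

end

/-!
Write `p = 2H ∈ [1, 2]`. If `y ≤ 1`, all arguments of `Φ` are nonnegative and
`Φ = F x - F 0` with `F u = (1 + u)^p - (1 + u - y)^p`. By the mean value theorem it suffices to
bound `F' u = p ((b + y)^(p-1) - b^(p-1))`, `b = 1 + u - y ≥ 1 - y`; increments of the concave
function `t ↦ t^(p-1)` decrease, so this is at most `p (1 - (1 - y)^(p-1)) ≤ p y`.
If `x ≤ 1 ≤ y`, then `t ↦ t^p` is `p y^(p-1)`-Lipschitz on `[0, y]`, which contains both
`|1 + x - y|` and `|1 - y|`, while `(1 + x)^p - 1 ≤ 2 p x`; hence `|Φ| ≤ 3 p x y`.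
-/

open Set

theorem ConcaveOn.map_add_sub_map_le_of_le {s : Set ℝ} {f : ℝ → ℝ} (hf : ConcaveOn ℝ s f)
    {a b h : ℝ} (ha : a ∈ s) (hbh : b + h ∈ s) (hab : a ≤ b) (hh : 0 ≤ h) :
    f (b + h) - f b ≤ f (a + h) - f a := by
  rcases (add_nonneg (sub_nonneg.2 hab) hh).eq_or_lt with hD | hD
  · obtain rfl : h = 0 := by linarith
    obtain rfl : b = a := by linarith
    rfl
  -- `a + h` and `b` are the two convex combinations of `a` and `b + h` with weights `θ`, `1 - θ`.
  set θ := h / (b - a + h)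
  have hθ0 : 0 ≤ θ := by positivity
  have hθ1 : 0 ≤ 1 - θ := sub_nonneg.2 ((div_le_one hD).2 (by linarith))
  have hah := hf.2 ha hbh hθ1 hθ0 (by ring)
  have hb := hf.2 ha hbh hθ0 hθ1 (by ring)
  have e1 : (1 - θ) • a + θ • (b + h) = a + h := by
    simp only [θ, smul_eq_mul]; field_simp; ring
  have e2 : θ • a + (1 - θ) • (b + h) = b := by
    simp only [θ, smul_eq_mul]; field_simp; ring
  rw [e1] at hah
  rw [e2] at hb
  simp only [smul_eq_mul] at hah hb
  linarith

theorem Real.rpow_add_sub_rpow_le {α y b : ℝ} (hα₀ : 0 ≤ α) (hα₁ : α ≤ 1) (hy₀ : 0 ≤ y)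
    (hy₁ : y ≤ 1) (hb : 1 - y ≤ b) : (b + y) ^ α - b ^ α ≤ y := by
  have hconc := (concaveOn_rpow hα₀ hα₁).map_add_sub_map_le_of_le
    (mem_Ici.2 (sub_nonneg.2 hy₁)) (mem_Ici.2 (by linarith)) hb hy₀
  have hself : 1 - y ≤ (1 - y) ^ α := self_le_rpow_of_le_one (by linarith) (by linarith) hα₁
  rw [sub_add_cancel, one_rpow] at hconc
  linarith

theorem Real.abs_rpow_sub_rpow_le {p M u v : ℝ} (hp : 1 ≤ p) (hu : u ∈ Icc 0 M)
    (hv : v ∈ Icc 0 M) : |u ^ p - v ^ p| ≤ p * M ^ (p - 1) * |u - v| := by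
  have hderiv : ∀ t ∈ Icc 0 M, HasDerivWithinAt (· ^ p) (p * t ^ (p - 1)) (Icc 0 M) t :=
    fun t _ ↦ (hasDerivAt_rpow_const (Or.inr hp)).hasDerivWithinAt
  have hbound : ∀ t ∈ Icc 0 M, ‖p * t ^ (p - 1)‖ ≤ p * M ^ (p - 1) := fun t ht ↦ by
    rw [norm_mul, norm_of_nonneg (by linarith), norm_of_nonneg (rpow_nonneg ht.1 _)]
    exact mul_le_mul_of_nonneg_left (rpow_le_rpow ht.1 ht.2 (by linarith)) (by linarith)
  exact (convex_Icc 0 M).norm_image_sub_le_of_norm_hasDerivWithin_le hderiv hbound hv hu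

theorem abs_PhiFn_le_of_y_le_one {H x y : ℝ} (hH : H ∈ Icc (1 / 2 : ℝ) 1) (hx : 0 ≤ x)
    (hy₀ : 0 ≤ y) (hy₁ : y ≤ 1) : |PhiFn H x y| ≤ 2 * H * (x * y) := by
  set p := 2 * H
  have hp : 1 ≤ p := by linarith [hH.1]
  set F : ℝ → ℝ := fun u ↦ (1 + u) ^ p - (1 + u - y) ^ p
  have hPhi : PhiFn H x y = F x - F 0 := by
    simp only [PhiFn, F, p, abs_of_nonneg (by linarith : (0 : ℝ) ≤ 1 + x),
      abs_of_nonneg (by linarith : (0 : ℝ) ≤ 1 + (x - y)),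
      abs_of_nonneg (by linarith : (0 : ℝ) ≤ 1 - y), add_zero, one_rpow, add_sub_assoc,
      zero_sub, ← sub_eq_add_neg]
    ring
  have hderiv : ∀ u ∈ Ici (0 : ℝ),
      HasDerivWithinAt F (p * ((1 + u) ^ (p - 1) - (1 + u - y) ^ (p - 1))) (Ici 0) u := by
    intro u _
    have h₁ := ((hasDerivAt_id' u).const_add 1).rpow_const (p := p) (Or.inr hp)
    have h₂ := (((hasDerivAt_id' u).const_add 1).sub_const y).rpow_const (p := p) (Or.inr hp)
    exact ((h₁.sub h₂).congr_deriv (by ring)).hasDerivWithinAt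
  have hbound : ∀ u ∈ Ici (0 : ℝ),
      ‖p * ((1 + u) ^ (p - 1) - (1 + u - y) ^ (p - 1))‖ ≤ p * y := by
    intro u hu
    have hb : 1 - y ≤ 1 + u - y := by linarith [mem_Ici.1 hu]
    have hinc := rpow_add_sub_rpow_le (α := p - 1) (by linarith) (by linarith [hH.2]) hy₀ hy₁ hb
    have hmono : (1 + u - y) ^ (p - 1) ≤ (1 + u) ^ (p - 1) :=
      rpow_le_rpow (by linarith) (by linarith) (by linarith)
    rw [sub_add_cancel] at hinc
    rw [norm_of_nonneg (mul_nonneg (by linarith) (sub_nonneg.2 hmono))]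
    exact mul_le_mul_of_nonneg_left hinc (by linarith)
  have hmvt := (convex_Ici 0).norm_image_sub_le_of_norm_hasDerivWithin_le hderiv hbound
    (mem_Ici.2 le_rfl) (mem_Ici.2 hx)
  rw [hPhi, ← norm_eq_abs]
  calc ‖F x - F 0‖ ≤ p * y * ‖x - 0‖ := hmvt
    _ = 2 * H * (x * y) := by rw [sub_zero, norm_of_nonneg hx]; ring

theorem abs_PhiFn_le_of_x_le_one_le_y {H x y : ℝ} (hH : H ∈ Icc (1 / 2 : ℝ) 1) (hx₀ : 0 ≤ x)
    (hx₁ : x ≤ 1) (hy : 1 ≤ y) : |PhiFn H x y| ≤ 6 * H * (x * y) := by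
  set p := 2 * H with hp_def
  have hp : 1 ≤ p := by linarith [hH.1]
  have hp' : p - 1 ≤ 1 := by linarith [hH.2]
  have hfirst : |(1 + x) ^ p - 1 ^ p| ≤ p * 2 * x :=
    calc |(1 + x) ^ p - 1 ^ p| ≤ p * 2 ^ (p - 1) * |1 + x - 1| :=
          abs_rpow_sub_rpow_le hp ⟨by linarith, by linarith⟩ ⟨zero_le_one, one_le_two⟩
      _ ≤ p * 2 * x := by
          rw [add_sub_cancel_left, abs_of_nonneg hx₀]
          gcongr
          exact rpow_le_self_of_one_le one_le_two hp'
  set u := |1 + (x - y)|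
  set v := |1 - y|
  have hsecond : |u ^ p - v ^ p| ≤ p * y * x :=
    calc |u ^ p - v ^ p| ≤ p * y ^ (p - 1) * |u - v| :=
          abs_rpow_sub_rpow_le hp ⟨abs_nonneg _, abs_le.2 ⟨by linarith, by linarith⟩⟩
            ⟨abs_nonneg _, abs_le.2 ⟨by linarith, by linarith⟩⟩
      _ ≤ p * y * x := by
          gcongr
          · exact rpow_le_self_of_one_le hy hp'
          · refine (abs_abs_sub_abs_le_abs_sub _ _).trans_eq ?_
            rw [show 1 + (x - y) - (1 - y) = x by ring, abs_of_nonneg hx₀]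
  have hPhi : PhiFn H x y = ((1 + x) ^ p - 1 ^ p) - (u ^ p - v ^ p) := by
    rw [PhiFn, one_rpow, abs_of_nonneg (by linarith : (0 : ℝ) ≤ 1 + x)]
    ring
  calc |PhiFn H x y| ≤ |(1 + x) ^ p - 1 ^ p| + |u ^ p - v ^ p| := by
        rw [hPhi]; exact abs_sub _ _
    _ ≤ p * 2 * x + p * y * x := add_le_add hfirst hsecond
    _ ≤ 3 * p * (x * y) := by nlinarith [le_mul_of_one_le_right hx₀ hy]
    _ = 6 * H * (x * y) := by rw [hp_def]; ring

/-- For `H ∈ (1/2,1)`, `sup_{(x,y) ∈ Q} |Φ(x,y)/(xy)| < ∞`, where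
`Q = {(x,y) ∈ (0,∞)² : max(x,y) < 1} ∪ {(x,y) ∈ (0,∞)² : min(x,y) < 1 ≤ max(x,y)}`. -/
theorem statement9 (H : ℝ) (hH : H ∈ Set.Ioo (1/2 : ℝ) 1) :
    ∃ C : ℝ, ∀ x y : ℝ, 0 < x → 0 < y →
      (max x y < 1 ∨ (min x y < 1 ∧ 1 ≤ max x y)) →
      |PhiFn H x y / (x * y)| ≤ C := by
  refine ⟨6, fun x y hx hy hQ ↦ ?_⟩
  have hH' : H ∈ Icc (1 / 2 : ℝ) 1 := Ioo_subset_Icc_self hH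
  have hxy : 0 < x * y := mul_pos hx hy
  have hmin : min x y < 1 := hQ.elim (min_le_max.trans_lt ·) And.left
  rw [abs_div, abs_of_pos hxy, div_le_iff₀ hxy]
  rcases le_total y 1 with hy₁ | hy₁
  · calc |PhiFn H x y| ≤ 2 * H * (x * y) := abs_PhiFn_le_of_y_le_one hH' hx.le hy.le hy₁
      _ ≤ 6 * (x * y) := by nlinarith [hH.2]
  · have hx₁ : x ≤ 1 := ((min_lt_iff.1 hmin).resolve_right hy₁.not_gt).le
    calc |PhiFn H x y| ≤ 6 * H * (x * y) := abs_PhiFn_le_of_x_le_one_le_y hH' hx.le hx₁ hy₁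
      _ ≤ 6 * (x * y) := by nlinarith [hH.2]
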